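/- The k-module EQSym[m] of multi-quasisymmetric functions with semigroup exponents E is a Hopf algebra, with coproduct Δ(M_w) = sum_{i=0}^n M_{(w_1,...,w_i)} ⊗ M_{(w_{i+1},...,w_n)}, counit ε(M_w) = δ_{w,∅}, and antipode S(M_w) = (−1)^{ℓ(w)} sum_{L ⊨ ℓ(w)} M_{L∘w^r}. -/

import Mathlib

open scoped Classical

/-- The quasi-shuffle product of two words over an alphabet `C` with a binary
operation `op`, with values in the free `k`-module on words. -/
noncomputable def qsh {k : Type*} [CommRing k] {C : Type*} (op : C → C → C) :
    List C → List C → (List C →₀ k)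
  | [], y => Finsupp.single y 1
  | x, [] => Finsupp.single x 1
  | a :: x, b :: y =>
      (qsh op x (b :: y)).mapDomain (a :: ·) + (qsh op (a :: x) y).mapDomain (b :: ·) +
        (qsh op x y).mapDomain (op a b :: ·)
  termination_by x y => x.length + y.length
  decreasing_by all_goals simp [List.length_cons] <;> omega

/-- The quasi-shuffle product extended bilinearly to the free module on words,
the product of `EQSym[m]` in the basis `{M_w}`. -/
noncomputable def mulW {k : Type*} [CommRing k] {C : Type*} (op : C → C → C)
    (f g : List C →₀ k) : List C →₀ k :=
  f.sum fun x cx => g.sum fun y cy => (cx * cy) • qsh op x y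

/-- The deconcatenation coproduct on a basis word, with values in the free
module on pairs of words (realizing `EQSym ⊗ EQSym` in the basis
`{M_{w'} ⊗ M_{w''}}`):  `Δ(M_w) = ∑_{i=0}^{n} M_{(w_1,…,w_i)} ⊗ M_{(w_{i+1},…,w_n)}`. -/
noncomputable def deconc {k : Type*} [CommRing k] {C : Type*} (x : List C) :
    (List C × List C) →₀ k :=
  ∑ i ∈ Finset.range (x.length + 1), Finsupp.single (x.take i, x.drop i) 1

/-- The counit `ε(M_w) = δ_{w,∅}`. -/
noncomputable def counitW {k : Type*} [CommRing k] {C : Type*} (x : List C) : k :=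
  if x = [] then 1 else 0

/-- The elementary tensor of two elements of the free module on words, inside
the free module on pairs of words. -/
noncomputable def tensorPair {k : Type*} [CommRing k] {C : Type*}
    (f g : List C →₀ k) : (List C × List C) →₀ k :=
  f.sum fun x cx => g.sum fun y cy => Finsupp.single (x, y) (cx * cy)

/-- The componentwise quasi-shuffle product on the free module on pairs of
words (the product of `EQSym ⊗ EQSym`). -/
noncomputable def mulPair {k : Type*} [CommRing k] {C : Type*} (op : C → C → C)
    (F G : (List C × List C) →₀ k) : (List C × List C) →₀ k :=
  F.sum fun p cp => G.sum fun q cq =>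
    (cp * cq) • tensorPair (qsh op p.1 q.1) (qsh op p.2 q.2)

/-- Compositions of `n`: lists of positive integers with sum `n`. -/
def Comps (n : ℕ) : Set (List ℕ) := {L | (∀ l ∈ L, 0 < l) ∧ L.sum = n}

/-- `L ∘ 𝐛`: merge consecutive blocks of `𝐛` of sizes given by `L`, combining
the entries of each block with `op` (with neutral element `z`). -/
def blocksOf {C : Type*} (op : C → C → C) (z : C) : List ℕ → List C → List C
  | [], _ => []
  | l :: L, b => ((b.take l).foldr op z) :: blocksOf op z L (b.drop l)

/-- The antipode on a basis word:
`S(M_w) = (−1)^{ℓ(w)} ∑_{L ⊨ ℓ(w)} M_{L ∘ w^r}`. -/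
noncomputable def antipodeW {k : Type*} [CommRing k] {C : Type*}
    (op : C → C → C) (z : C) (x : List C) : List C →₀ k :=
  ((-1 : ℤ) ^ x.length) •
    ∑ᶠ L ∈ Comps x.length, Finsupp.single (blocksOf op z L x.reverse) (1 : k)

/-!
`Δ` is deconcatenation, so coassociativity and the counit laws only re-index the ways of
cutting a word into pieces. Multiplicativity of `Δ` is an induction along the quasi-shuffle
recursion: a cut of `a :: u` either lies before `a` or is a cut of `u` with `a` put in front
of its left piece. `ε` is multiplicative because the empty word occurs in a quasi-shuffle only
of two empty words.

For the antipode write `S(M_w) = (-1)^ℓ(w) Σ(w^r)`, where `Σ(u)` is the sum of all coarsenings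
`L ∘ u`; splitting off the first block of `L` gives a recursion for `Σ`. Expanding the products
`S(M_{(w_1,…,w_p)}) M_{(w_{p+1},…,w_n)}` by the three-term recursion of the quasi-shuffle shows
that their sum over `p ≤ i` is
`(-1)^i ∑_{j ≤ i} (w_{j+1} + ⋯ + w_{i+1}) :: (Σ((w_1,…,w_j)^r) M_{(w_{i+2},…,w_n)})`,
which for `i = n - 1` is `-S(M_w)`. The other antipode identity follows by reversing words:
reversal is multiplicative for the (commutative) quasi-shuffle product and commutes with `S`.
-/

section

variable {k : Type*} [CommRing k] {C : Type*}

section Deconcatenation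

theorem take_injOn_range (x : List C) :
    Set.InjOn (x.take ·) (Finset.range (x.length + 1)) := by
  intro i hi j hj h
  simp only [Finset.coe_range, Set.mem_Iio] at hi hj
  have := List.take_eq_take_iff.1 h
  omega

theorem deconc_apply_take_drop (x : List C) {i : ℕ} (hi : i ∈ Finset.range (x.length + 1)) :
    deconc (k := k) x (x.take i, x.drop i) = 1 := by
  rw [deconc, Finsupp.finsetSum_apply, Finset.sum_eq_single_of_mem i hi]
  · simp
  · intro j hj hji
    exact Finsupp.single_eq_of_ne fun h => hji (take_injOn_range x hj hi (Prod.ext_iff.1 h).1.symm)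

theorem deconc_sum_index {M : Type*} [AddCommMonoid M] (x : List C)
    (g : List C × List C → k → M) (hg : ∀ p, g p 0 = 0) :
    (deconc (k := k) x).sum g =
      ∑ i ∈ Finset.range (x.length + 1), g (x.take i, x.drop i) 1 := by
  have hsupp : (deconc (k := k) x).support ⊆
      (Finset.range (x.length + 1)).image fun i => (x.take i, x.drop i) := by
    refine Finsupp.support_finsetSum.trans (Finset.biUnion_subset.2 fun i hi => ?_)
    exact Finsupp.support_single_subset.trans
      (by simpa using ⟨i, Nat.lt_succ_iff.1 (Finset.mem_range.1 hi), rfl⟩)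
  rw [Finsupp.sum_of_support_subset _ hsupp _ fun p _ => hg p,
    Finset.sum_image fun i hi j hj h => take_injOn_range x hi hj (Prod.ext_iff.1 h).1]
  exact Finset.sum_congr rfl fun i hi => by rw [deconc_apply_take_drop x hi]

theorem deconc_coassoc (x : List C) :
    ((deconc (k := k) x).sum fun p cp =>
        (deconc (k := k) p.1).sum fun q cq =>
          Finsupp.single (q.1, q.2, p.2) (cp * cq)) =
      ((deconc (k := k) x).sum fun p cp =>
        (deconc (k := k) p.2).sum fun q cq =>
          Finsupp.single (p.1, q.1, q.2) (cp * cq)) := by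
  rw [deconc_sum_index _ _ fun p => by simp [Finsupp.sum],
    deconc_sum_index _ _ fun p => by simp [Finsupp.sum]]
  simp only [one_mul]
  rw [Finset.sum_congr rfl fun i _ => deconc_sum_index _ _ fun q => by simp,
    Finset.sum_congr rfl fun i _ => deconc_sum_index _ _ fun q => by simp]
  set f : ℕ → ℕ → _ := fun j i =>
    Finsupp.single (x.take j, (x.take i).drop j, x.drop i) (1 : k)
  calc _ = ∑ i ∈ Finset.range (x.length + 1), ∑ j ∈ Finset.range (i + 1), f j i := by
        refine Finset.sum_congr rfl fun i hi => ?_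
        rw [Finset.mem_range] at hi
        rw [List.length_take, min_eq_left (by omega)]
        refine Finset.sum_congr rfl fun j hj => ?_
        rw [Finset.mem_range] at hj
        rw [List.take_take, min_eq_left (by omega)]
    _ = ∑ j ∈ Finset.range (x.length + 1), ∑ i ∈ Finset.Ico j (x.length + 1), f j i := by
        simp only [Finset.range_eq_Ico, Finset.sum_Ico_Ico_comm]
    _ = _ := by
        refine Finset.sum_congr rfl fun j hj => ?_
        rw [Finset.mem_range] at hj
        rw [Finset.sum_Ico_eq_sum_range, List.length_drop,
          show x.length + 1 - j = x.length - j + 1 by omega]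
        refine Finset.sum_congr rfl fun b _ => ?_
        rw [List.take_drop, List.drop_drop]

theorem sum_deconc_counitW_fst (x : List C) :
    ((deconc (k := k) x).sum fun p cp =>
      (cp * counitW (k := k) p.1) • Finsupp.single p.2 (1 : k)) = Finsupp.single x 1 := by
  rw [deconc_sum_index _ _ fun p => by simp, Finset.sum_eq_single_of_mem 0 (by simp)]
  · simp [counitW]
  · intro i hi hi0
    have : x.take i ≠ [] := by
      rw [Ne, List.take_eq_nil_iff]
      rintro (h | rfl) <;> simp_all
    simp [counitW, this]

theorem sum_deconc_counitW_snd (x : List C) :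
    ((deconc (k := k) x).sum fun p cp =>
      (cp * counitW (k := k) p.2) • Finsupp.single p.1 (1 : k)) = Finsupp.single x 1 := by
  rw [deconc_sum_index _ _ fun p => by simp, Finset.sum_eq_single_of_mem x.length (by simp)]
  · simp [counitW]
  · intro i hi hin
    have : x.drop i ≠ [] := by
      rw [Ne, List.drop_eq_nil_iff]
      simp only [Finset.mem_range] at hi
      omega
    simp [counitW, this]

theorem deconc_cons (c : C) (z : List C) :
    deconc (k := k) (c :: z) =
      Finsupp.single ([], c :: z) 1 + (deconc z).mapDomain (Prod.map (c :: ·) id) := by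
  rw [deconc, deconc, List.length_cons, Finset.sum_range_succ', add_comm,
    Finsupp.mapDomain_finsetSum]
  simp only [Finsupp.mapDomain_single, List.take_succ_cons, List.drop_succ_cons]
  rfl

end Deconcatenation

section QuasiShuffleProduct

variable (op : C → C → C)

@[simp]
theorem qsh_nil_left (y : List C) : qsh (k := k) op [] y = Finsupp.single y 1 := by
  rw [qsh]

@[simp]
theorem qsh_nil_right (x : List C) : qsh (k := k) op x [] = Finsupp.single x 1 := by
  cases x <;> simp [qsh]

theorem qsh_cons_cons (a b : C) (x y : List C) :
    qsh (k := k) op (a :: x) (b :: y) =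
      (qsh op x (b :: y)).mapDomain (a :: ·) + (qsh op (a :: x) y).mapDomain (b :: ·) +
        (qsh op x y).mapDomain (op a b :: ·) := by
  rw [qsh]

theorem mapDomain_cons_apply_nil (c : C) (f : List C →₀ k) : f.mapDomain (c :: ·) [] = 0 :=
  Finsupp.mapDomain_of_notMem_range _ _ fun ⟨_, h⟩ => List.cons_ne_nil _ _ h

theorem qsh_apply_nil (x y : List C) :
    qsh (k := k) op x y [] = counitW (k := k) x * counitW (k := k) y := by
  match x, y with
  | [], y => by_cases hy : y = [] <;> simp [counitW, hy, eq_comm]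
  | a :: x, [] => simp [counitW]
  | a :: x, b :: y => simp [qsh_cons_cons, mapDomain_cons_apply_nil, counitW]

theorem sum_mul_counitW (f : List C →₀ k) :
    (f.sum fun z c => c * counitW (k := k) z) = f [] := by
  simp only [counitW, mul_ite, mul_one, mul_zero]
  exact Finsupp.sum_ite_self_eq' f []

theorem mulW_eq_linearCombination (f g : List C →₀ k) :
    mulW op f g =
      Finsupp.linearCombination k (fun x => Finsupp.linearCombination k (qsh op x) g) f := by
  simp only [mulW, Finsupp.linearCombination_apply, Finsupp.smul_sum, mul_smul]

theorem mulW_single_single (x y : List C) (c d : k) :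
    mulW op (Finsupp.single x c) (Finsupp.single y d) = (c * d) • qsh op x y := by
  simp [mulW_eq_linearCombination, mul_smul, smul_comm c d]

theorem mulW_zero_left (g : List C →₀ k) : mulW op 0 g = 0 := by
  simp [mulW_eq_linearCombination]

theorem mulW_zero_right (f : List C →₀ k) : mulW op f 0 = 0 := by
  simp [mulW]

theorem mulW_add_left (f f' g : List C →₀ k) :
    mulW op (f + f') g = mulW op f g + mulW op f' g := by
  simp [mulW_eq_linearCombination]

theorem mulW_add_right (f g g' : List C →₀ k) :
    mulW op f (g + g') = mulW op f g + mulW op f g' := by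
  simp only [mulW, ← Finsupp.sum_add]
  exact Finsupp.sum_congr fun x _ =>
    Finsupp.sum_add_index' (fun _ => by simp) fun _ _ _ => by rw [mul_add, add_smul]

theorem mulW_smul_left (c : k) (f g : List C →₀ k) :
    mulW op (c • f) g = c • mulW op f g := by
  simp [mulW_eq_linearCombination]

theorem mulW_sum_left {ι : Type*} (s : Finset ι) (f : ι → List C →₀ k)
    (g : List C →₀ k) :
    mulW op (∑ i ∈ s, f i) g = ∑ i ∈ s, mulW op (f i) g := by
  simp [mulW_eq_linearCombination]

theorem mulW_single_nil_left (g : List C →₀ k) : mulW op (Finsupp.single [] 1) g = g := by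
  induction g using Finsupp.induction_linear with
  | zero => exact mulW_zero_right op _
  | add g g' hg hg' => rw [mulW_add_right, hg, hg']
  | single y d => simp [mulW_single_single]

theorem mulW_single_nil_right (f : List C →₀ k) : mulW op f (Finsupp.single [] 1) = f := by
  induction f using Finsupp.induction_linear with
  | zero => exact mulW_zero_left op _
  | add f f' hf hf' => rw [mulW_add_left, hf, hf']
  | single x c => simp [mulW_single_single]

theorem mulW_mapDomain_cons_single_cons (a b : C) (f : List C →₀ k) (v : List C) :
    mulW op (f.mapDomain (a :: ·)) (Finsupp.single (b :: v) 1) =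
      (mulW op f (Finsupp.single (b :: v) 1)).mapDomain (a :: ·) +
        (mulW op (f.mapDomain (a :: ·)) (Finsupp.single v 1)).mapDomain (b :: ·) +
        (mulW op f (Finsupp.single v 1)).mapDomain (op a b :: ·) := by
  induction f using Finsupp.induction_linear with
  | zero => simp [mulW_zero_left]
  | add f f' hf hf' =>
    simp only [Finsupp.mapDomain_add, mulW_add_left, hf, hf']
    abel
  | single x c =>
    simp only [Finsupp.mapDomain_single, mulW_single_single, qsh_cons_cons, smul_add,
      Finsupp.mapDomain_smul]

theorem qsh_comm (hop : ∀ a b, op a b = op b a) : ∀ x y : List C,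
    qsh (k := k) op x y = qsh op y x
  | [], y => by simp
  | a :: x, [] => by simp
  | a :: x, b :: y => by
    rw [qsh_cons_cons, qsh_cons_cons, qsh_comm hop x (b :: y), qsh_comm hop (a :: x) y,
      qsh_comm hop x y, hop]
    abel
termination_by x y => x.length + y.length

theorem mulW_comm (hop : ∀ a b, op a b = op b a) (f g : List C →₀ k) :
    mulW op f g = mulW op g f := by
  rw [mulW, mulW, Finsupp.sum_comm]
  exact Finsupp.sum_congr fun y _ => Finsupp.sum_congr fun x _ => by rw [mul_comm, qsh_comm op hop]

theorem mapDomain_cons_mapDomain_append (c e : C) (f : List C →₀ k) :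
    (f.mapDomain (· ++ [e])).mapDomain (c :: ·) =
      (f.mapDomain (c :: ·)).mapDomain (· ++ [e]) := by
  rw [← Finsupp.mapDomain_comp, ← Finsupp.mapDomain_comp]
  rfl

theorem qsh_append_singleton_append_singleton : ∀ (u v : List C) (a b : C),
    qsh (k := k) op (u ++ [a]) (v ++ [b]) =
      (qsh op u (v ++ [b])).mapDomain (· ++ [a]) + (qsh op (u ++ [a]) v).mapDomain (· ++ [b]) +
        (qsh op u v).mapDomain (· ++ [op a b])
  | [], [], a, b => by
    simp only [List.nil_append, qsh_cons_cons, qsh_nil_left, qsh_nil_right,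
      Finsupp.mapDomain_single, List.singleton_append]
    abel
  | [], d :: v, a, b => by
    have ih := qsh_append_singleton_append_singleton [] v a b
    simp only [List.nil_append] at ih ⊢
    rw [List.cons_append, qsh_cons_cons, ih, qsh_cons_cons op a d]
    simp only [qsh_nil_left, Finsupp.mapDomain_add, Finsupp.mapDomain_single,
      mapDomain_cons_mapDomain_append, List.cons_append]
    abel
  | c :: u, [], a, b => by
    have ih := qsh_append_singleton_append_singleton u [] a b
    simp only [List.nil_append] at ih ⊢
    rw [List.cons_append, qsh_cons_cons, ih, qsh_cons_cons op c b]
    simp only [qsh_nil_right, Finsupp.mapDomain_add, Finsupp.mapDomain_single,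
      mapDomain_cons_mapDomain_append, List.cons_append]
    abel
  | c :: u, d :: v, a, b => by
    have ih₁ := qsh_append_singleton_append_singleton u (d :: v) a b
    have ih₂ := qsh_append_singleton_append_singleton (c :: u) v a b
    have ih₃ := qsh_append_singleton_append_singleton u v a b
    simp only [List.cons_append] at ih₁ ih₂ ih₃ ⊢
    rw [qsh_cons_cons, ih₁, ih₂, ih₃, qsh_cons_cons op c d, qsh_cons_cons op c d,
      qsh_cons_cons op c d]
    simp only [Finsupp.mapDomain_add, mapDomain_cons_mapDomain_append]
    abel
termination_by u v => u.length + v.length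

theorem mapDomain_reverse_qsh : ∀ x y : List C,
    (qsh (k := k) op x y).mapDomain List.reverse = qsh op x.reverse y.reverse
  | [], y => by simp
  | a :: x, [] => by simp
  | a :: x, b :: y => by
    have hrev : ∀ (c : C) (f : List C →₀ k),
        (f.mapDomain (c :: ·)).mapDomain List.reverse =
          (f.mapDomain List.reverse).mapDomain (· ++ [c]) := by
      intro c f
      rw [← Finsupp.mapDomain_comp, ← Finsupp.mapDomain_comp]
      exact Finsupp.mapDomain_congr fun z _ => by simp
    rw [qsh_cons_cons, Finsupp.mapDomain_add, Finsupp.mapDomain_add, hrev, hrev, hrev,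
      mapDomain_reverse_qsh x (b :: y), mapDomain_reverse_qsh (a :: x) y,
      mapDomain_reverse_qsh x y, List.reverse_cons, List.reverse_cons,
      qsh_append_singleton_append_singleton]
termination_by x y => x.length + y.length

theorem mapDomain_reverse_mulW (f g : List C →₀ k) :
    (mulW op f g).mapDomain List.reverse =
      mulW op (f.mapDomain List.reverse) (g.mapDomain List.reverse) := by
  induction f using Finsupp.induction_linear with
  | zero => simp [mulW_zero_left]
  | add f f' hf hf' => rw [mulW_add_left, Finsupp.mapDomain_add, hf, hf', Finsupp.mapDomain_add,
      mulW_add_left]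
  | single x c =>
    induction g using Finsupp.induction_linear with
    | zero => simp [mulW_zero_right]
    | add g g' hg hg' => rw [mulW_add_right, Finsupp.mapDomain_add, hg, hg',
        Finsupp.mapDomain_add, mulW_add_right]
    | single y d =>
      simp only [Finsupp.mapDomain_single, mulW_single_single, Finsupp.mapDomain_smul,
        mapDomain_reverse_qsh]

end QuasiShuffleProduct

section Coproduct

theorem tensorPair_single_left (x : List C) (c : k) (g : List C →₀ k) :
    tensorPair (Finsupp.single x c) g = c • g.mapDomain (x, ·) := by
  rw [tensorPair, Finsupp.sum_single_index (by simp), Finsupp.mapDomain, Finsupp.smul_sum]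
  simp only [Finsupp.smul_single, smul_eq_mul]

theorem tensorPair_add_left (f f' g : List C →₀ k) :
    tensorPair (f + f') g = tensorPair f g + tensorPair f' g := by
  refine Finsupp.sum_add_index' (fun _ => by simp) fun x c c' => ?_
  simp only [add_mul, Finsupp.single_add, Finsupp.sum_add]

theorem tensorPair_mapDomain_left (a : C) (f g : List C →₀ k) :
    tensorPair (f.mapDomain (a :: ·)) g = (tensorPair f g).mapDomain (Prod.map (a :: ·) id) := by
  induction f using Finsupp.induction_linear with
  | zero => simp [tensorPair]
  | add f f' hf hf' => simp only [Finsupp.mapDomain_add, tensorPair_add_left, hf, hf']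
  | single x c =>
    simp only [Finsupp.mapDomain_single, tensorPair_single_left, Finsupp.mapDomain_smul,
      ← Finsupp.mapDomain_comp]
    rfl

theorem tensorPair_nil_left (g : List C →₀ k) :
    tensorPair (Finsupp.single [] 1) g = g.mapDomain (([] : List C), ·) := by
  rw [tensorPair_single_left, one_smul]

theorem tensorPair_single_cons (c : C) (u : List C) (g : List C →₀ k) :
    tensorPair (Finsupp.single (c :: u) 1) g =
      (tensorPair (Finsupp.single u 1) g).mapDomain (Prod.map (c :: ·) id) := by
  rw [← tensorPair_mapDomain_left, Finsupp.mapDomain_single]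

theorem linearCombination_deconc_mapDomain_cons (c : C) (f : List C →₀ k) :
    Finsupp.linearCombination k deconc (f.mapDomain (c :: ·)) =
      (f.mapDomain (c :: ·)).mapDomain ([], ·) +
        (Finsupp.linearCombination k deconc f).mapDomain (Prod.map (c :: ·) id) := by
  induction f using Finsupp.induction_linear with
  | zero => simp
  | add f f' hf hf' => simp only [Finsupp.mapDomain_add, map_add, hf, hf']; abel
  | single x c =>
    simp [deconc_cons, Finsupp.mapDomain_single, Finsupp.mapDomain_smul, smul_add]

theorem linearCombination_deconc_qsh (op : C → C → C) : ∀ x y : List C,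
    Finsupp.linearCombination k deconc (qsh (k := k) op x y) =
      ∑ i ∈ Finset.range (x.length + 1), ∑ j ∈ Finset.range (y.length + 1),
        tensorPair (qsh (k := k) op (x.take i) (y.take j)) (qsh op (x.drop i) (y.drop j))
  | [], y => by simp [deconc, tensorPair_single_left]
  | a :: x, [] => by simp [deconc, tensorPair_single_left]
  | a :: x, b :: y => by
    rw [qsh_cons_cons, map_add, map_add, linearCombination_deconc_mapDomain_cons,
      linearCombination_deconc_mapDomain_cons, linearCombination_deconc_mapDomain_cons,
      linearCombination_deconc_qsh op x (b :: y), linearCombination_deconc_qsh op (a :: x) y,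
      linearCombination_deconc_qsh op x y]
    simp only [List.length_cons, Finset.sum_range_succ', List.take_succ_cons,
      List.drop_succ_cons, List.take_zero, List.drop_zero, qsh_cons_cons, qsh_nil_left,
      qsh_nil_right, tensorPair_add_left, tensorPair_mapDomain_left, tensorPair_single_cons,
      tensorPair_nil_left, Finsupp.mapDomain_add, Finsupp.mapDomain_finsetSum,
      Finset.sum_add_distrib]
    abel
termination_by x y => x.length + y.length

theorem mulPair_deconc_deconc (op : C → C → C) (x y : List C) :
    mulPair op (deconc (k := k) x) (deconc y) =
      ∑ i ∈ Finset.range (x.length + 1), ∑ j ∈ Finset.range (y.length + 1),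
        tensorPair (qsh (k := k) op (x.take i) (y.take j)) (qsh op (x.drop i) (y.drop j)) := by
  rw [mulPair, deconc_sum_index _ _ fun p => by simp [Finsupp.sum]]
  refine Finset.sum_congr rfl fun i _ => ?_
  rw [deconc_sum_index _ _ fun q => by simp]
  simp only [one_mul, one_smul]

theorem sum_smul_deconc_qsh (op : C → C → C) (x y : List C) :
    ((qsh (k := k) op x y).sum fun z cz => cz • deconc (k := k) z) =
      mulPair op (deconc x) (deconc y) := by
  rw [← Finsupp.linearCombination_apply, linearCombination_deconc_qsh, mulPair_deconc_deconc]

end Coproduct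

section Coarsenings

def compositionsFinset (n : ℕ) : Finset (List ℕ) :=
  Finset.univ.image (Composition.blocks (n := n))

theorem mem_compositionsFinset {n : ℕ} {L : List ℕ} :
    L ∈ compositionsFinset n ↔ (∀ l ∈ L, 0 < l) ∧ L.sum = n := by
  simp only [compositionsFinset, Finset.mem_image, Finset.mem_univ, true_and]
  constructor
  · rintro ⟨c, rfl⟩
    exact ⟨fun _ => c.blocks_pos, c.blocks_sum⟩
  · rintro ⟨hpos, hsum⟩
    exact ⟨⟨L, hpos _, hsum⟩, rfl⟩

theorem reverse_mem_compositionsFinset {n : ℕ} {L : List ℕ} :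
    L.reverse ∈ compositionsFinset n ↔ L ∈ compositionsFinset n := by
  simp [mem_compositionsFinset]

theorem coe_compositionsFinset (n : ℕ) : ↑(compositionsFinset n) = Comps n :=
  Set.ext fun _ => mem_compositionsFinset

theorem compositionsFinset_zero : compositionsFinset 0 = {[]} := by
  ext L
  rw [mem_compositionsFinset, Finset.mem_singleton]
  refine ⟨fun ⟨hpos, hsum⟩ => ?_, by rintro rfl; simp⟩
  obtain _ | ⟨l, L⟩ := L
  · rfl
  · have := hpos l (List.mem_cons_self ..)
    simp only [List.sum_cons] at hsum
    omega

theorem compositionsFinset_succ (n : ℕ) :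
    compositionsFinset (n + 1) = (Finset.range (n + 1)).biUnion
      fun j => (compositionsFinset j).image ((n + 1 - j) :: ·) := by
  ext L
  simp only [mem_compositionsFinset, Finset.mem_biUnion, Finset.mem_range, Finset.mem_image]
  constructor
  · rintro ⟨hpos, hsum⟩
    obtain _ | ⟨l, L⟩ := L
    · simp at hsum
    · have := hpos l (List.mem_cons_self ..)
      simp only [List.sum_cons] at hsum
      exact ⟨L.sum, by omega, L, ⟨fun l hl => hpos l (List.mem_cons_of_mem _ hl), rfl⟩,
        by rw [← hsum, Nat.add_sub_cancel]⟩
  · rintro ⟨j, hj, L, ⟨hpos, hsum⟩, rfl⟩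
    refine ⟨fun l hl => ?_, by simp only [List.sum_cons, hsum]; omega⟩
    rcases List.mem_cons.1 hl with rfl | hl
    exacts [by omega, hpos l hl]

theorem sum_compositionsFinset_succ {M : Type*} [AddCommMonoid M] (n : ℕ) (F : List ℕ → M) :
    ∑ L ∈ compositionsFinset (n + 1), F L =
      ∑ j ∈ Finset.range (n + 1), ∑ L ∈ compositionsFinset j, F ((n + 1 - j) :: L) := by
  rw [compositionsFinset_succ, Finset.sum_biUnion]
  · exact Finset.sum_congr rfl fun j _ => Finset.sum_image fun _ _ _ _ h => List.cons_injective h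
  · intro i hi j hj hij
    simp only [Finset.coe_range, Set.mem_Iio] at hi hj
    refine Finset.disjoint_left.2 fun L hLi hLj => hij ?_
    obtain ⟨L, -, rfl⟩ := Finset.mem_image.1 hLi
    obtain ⟨L', -, h⟩ := Finset.mem_image.1 hLj
    have := (List.cons_eq_cons.1 h).1
    omega

theorem blocksOf_append_singleton (op : C → C → C) (z : C) :
    ∀ (K : List ℕ) (l : ℕ) (t : List C), K.sum + l = t.length →
      blocksOf op z (K ++ [l]) t =
        blocksOf op z K (t.take (t.length - l)) ++ [(t.drop (t.length - l)).foldr op z]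
  | [], l, t, h => by
    simp only [List.sum_nil, zero_add] at h
    simp [blocksOf, h]
  | m :: K, l, t, h => by
    simp only [List.sum_cons] at h
    rw [List.cons_append, blocksOf, blocksOf,
      blocksOf_append_singleton op z K l (t.drop m) (by simp; omega), List.cons_append,
      List.take_take, min_eq_left (by omega), List.drop_take, List.drop_drop, List.length_drop,
      Nat.sub_right_comm, show m + (t.length - l - m) = t.length - l by omega]

end Coarsenings

section Antipode

theorem sum_drop_take_succ [AddMonoid C] (w : List C) {i j : ℕ} (hji : j ≤ i)
    (hi : i < w.length) :
    ((w.take (i + 1)).drop j).sum = ((w.take i).drop j).sum + w[i] := by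
  rw [List.take_add_one, List.getElem?_eq_getElem hi,
    List.drop_append_of_le_length (by simp; omega), Option.toList_some,
    List.sum_append, List.sum_singleton]

theorem sum_drop_take_succ_self [AddMonoid C] (w : List C) {i : ℕ} (hi : i < w.length) :
    ((w.take (i + 1)).drop i).sum = w[i] := by
  rw [sum_drop_take_succ w le_rfl hi, List.drop_eq_nil_of_le (by simp), List.sum_nil, zero_add]

variable [AddCommMonoid C]

noncomputable def coarseningSum (u : List C) : List C →₀ k :=
  ∑ L ∈ compositionsFinset u.length, Finsupp.single (blocksOf (· + ·) 0 L u) 1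

theorem antipodeW_eq_smul_coarseningSum (x : List C) :
    antipodeW (k := k) (· + ·) 0 x = (-1 : k) ^ x.length • coarseningSum x.reverse := by
  rw [antipodeW, ← coe_compositionsFinset, finsum_mem_coe_finset, coarseningSum,
    List.length_reverse, ← Int.cast_smul_eq_zsmul k]
  norm_num

theorem coarseningSum_nil : coarseningSum (k := k) ([] : List C) = Finsupp.single [] 1 := by
  simp [coarseningSum, compositionsFinset_zero, blocksOf]

theorem coarseningSum_reverse_eq_sum (v : List C) {n : ℕ} (hv : v.length = n + 1) :
    coarseningSum (k := k) v.reverse = ∑ j ∈ Finset.range (n + 1),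
      (coarseningSum (v.take j).reverse).mapDomain ((v.drop j).sum :: ·) := by
  rw [coarseningSum, List.length_reverse, hv, sum_compositionsFinset_succ]
  refine Finset.sum_congr rfl fun j hj => ?_
  have hj := Finset.mem_range.1 hj
  have hlen : (v.take j).reverse.length = j := by simp; omega
  rw [coarseningSum, hlen, Finsupp.mapDomain_finsetSum]
  refine Finset.sum_congr rfl fun L _ => ?_
  rw [Finsupp.mapDomain_single, blocksOf, List.take_reverse, List.drop_reverse, hv,
    show n + 1 - (n + 1 - j) = j by omega, ← List.sum_eq_foldr, List.sum_reverse]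

theorem coarseningSum_reverse_take_succ (w : List C) {i : ℕ} (hi : i < w.length) :
    coarseningSum (k := k) (w.take (i + 1)).reverse = ∑ j ∈ Finset.range (i + 1),
      (coarseningSum (w.take j).reverse).mapDomain (((w.take (i + 1)).drop j).sum :: ·) := by
  rw [coarseningSum_reverse_eq_sum _ (n := i) (by simp; omega)]
  refine Finset.sum_congr rfl fun j hj => ?_
  rw [List.take_take, min_eq_left (by simp at hj; omega)]

theorem antipodeW_nil : antipodeW (k := k) (· + ·) (0 : C) [] = Finsupp.single [] 1 := by
  simp [antipodeW_eq_smul_coarseningSum, coarseningSum_nil]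

theorem sum_antipodeW_take_mulW_drop (w : List C) : ∀ i, i < w.length →
    ∑ p ∈ Finset.range (i + 1),
      mulW (· + ·) (antipodeW (k := k) (· + ·) 0 (w.take p)) (Finsupp.single (w.drop p) 1) =
    (-1 : k) ^ i • ∑ j ∈ Finset.range (i + 1),
      (mulW (· + ·) (coarseningSum (w.take j).reverse)
        (Finsupp.single (w.drop (i + 1)) 1)).mapDomain (((w.take (i + 1)).drop j).sum :: ·)
  | 0, h => by
    rw [Finset.sum_range_one, Finset.sum_range_one, List.take_zero, List.drop_zero, antipodeW_nil,
      mulW_single_nil_left, List.reverse_nil, coarseningSum_nil, mulW_single_nil_left,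
      Finsupp.mapDomain_single, pow_zero, one_smul, sum_drop_take_succ_self w h,
      ← List.drop_eq_getElem_cons h, List.drop_zero]
  | i + 1, h => by
    have hlast : ∑ j ∈ Finset.range (i + 1), (mulW (· + ·) (coarseningSum (k := k)
        (w.take j).reverse) (Finsupp.single (w.drop (i + 1 + 1)) 1)).mapDomain
          ((((w.take (i + 1)).drop j).sum + w[i + 1]) :: ·) =
        ∑ j ∈ Finset.range (i + 1), (mulW (· + ·) (coarseningSum (w.take j).reverse)
          (Finsupp.single (w.drop (i + 1 + 1)) 1)).mapDomain
          (((w.take (i + 1 + 1)).drop j).sum :: ·) :=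
      Finset.sum_congr rfl fun j hj => by
        rw [sum_drop_take_succ w (j := j) (by simp at hj; omega) h]
    have hmid : ∑ j ∈ Finset.range (i + 1), (mulW (· + ·)
        ((coarseningSum (k := k) (w.take j).reverse).mapDomain
          (((w.take (i + 1)).drop j).sum :: ·)) (Finsupp.single (w.drop (i + 1 + 1)) 1)).mapDomain
          (w[i + 1] :: ·) =
        (mulW (· + ·) (coarseningSum (w.take (i + 1)).reverse)
          (Finsupp.single (w.drop (i + 1 + 1)) 1)).mapDomain
          (((w.take (i + 1 + 1)).drop (i + 1)).sum :: ·) := by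
      rw [sum_drop_take_succ_self w h, coarseningSum_reverse_take_succ w (by omega), mulW_sum_left,
        Finsupp.mapDomain_finsetSum]
    rw [Finset.sum_range_succ, sum_antipodeW_take_mulW_drop w i (by omega),
      antipodeW_eq_smul_coarseningSum, List.length_take_of_le (by omega), mulW_smul_left,
      coarseningSum_reverse_take_succ w (by omega), mulW_sum_left, List.drop_eq_getElem_cons h]
    -- Of the three terms of the quasi-shuffle recursion, the first cancels the previous
    -- partial sum, the second adds up to the new term `j = i + 1`, the third extends the blocks.
    simp only [mulW_mapDomain_cons_single_cons, Finset.sum_add_distrib]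
    rw [hmid, hlast, Finset.sum_range_succ _ (i + 1)]
    module

theorem sum_antipodeW_take_mulW_drop_eq_counitW (w : List C) :
    ∑ p ∈ Finset.range (w.length + 1),
      mulW (· + ·) (antipodeW (k := k) (· + ·) 0 (w.take p)) (Finsupp.single (w.drop p) 1) =
    counitW (k := k) w • Finsupp.single [] 1 := by
  obtain _ | ⟨a, w'⟩ := w
  · simp [antipodeW_nil, mulW_single_nil_left, counitW]
  have hw : (a :: w').length = w'.length + 1 := rfl
  have htake : (a :: w').take (w'.length + 1) = a :: w' := by rw [← hw, List.take_length]
  have hdrop : (a :: w').drop (w'.length + 1) = [] := by rw [← hw, List.drop_length]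
  rw [hw, Finset.sum_range_succ, sum_antipodeW_take_mulW_drop _ _ (by simp), htake, hdrop]
  simp only [mulW_single_nil_right]
  rw [← coarseningSum_reverse_eq_sum _ hw, antipodeW_eq_smul_coarseningSum, hw, counitW,
    if_neg (List.cons_ne_nil a w'), zero_smul]
  module

theorem reverse_blocksOf : ∀ (L : List ℕ) (u : List C), L.sum = u.length →
    (blocksOf (· + ·) 0 L u).reverse = blocksOf (· + ·) 0 L.reverse u.reverse
  | [], u, _ => rfl
  | l :: L, u, h => by
    simp only [List.sum_cons] at h
    rw [blocksOf, List.reverse_cons, reverse_blocksOf L (u.drop l) (by simp; omega),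
      List.reverse_cons, blocksOf_append_singleton _ _ _ _ _ (by simp; omega),
      List.take_reverse, List.drop_reverse, List.length_reverse,
      show u.length - (u.length - l) = l by omega, ← List.sum_eq_foldr, ← List.sum_eq_foldr,
      List.sum_reverse]

theorem mapDomain_reverse_coarseningSum (u : List C) :
    (coarseningSum (k := k) u).mapDomain List.reverse = coarseningSum u.reverse := by
  rw [coarseningSum, coarseningSum, List.length_reverse, Finsupp.mapDomain_finsetSum]
  simp only [Finsupp.mapDomain_single]
  exact Finset.sum_nbij' List.reverse List.reverse
    (fun _ hL => reverse_mem_compositionsFinset.2 hL)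
    (fun _ hL => reverse_mem_compositionsFinset.2 hL)
    (fun L _ => L.reverse_reverse) (fun L _ => L.reverse_reverse)
    fun L hL => by rw [reverse_blocksOf L u (mem_compositionsFinset.1 hL).2]

theorem mapDomain_reverse_antipodeW (v : List C) :
    (antipodeW (k := k) (· + ·) 0 v).mapDomain List.reverse =
      antipodeW (· + ·) 0 v.reverse := by
  rw [antipodeW_eq_smul_coarseningSum, antipodeW_eq_smul_coarseningSum, Finsupp.mapDomain_smul,
    mapDomain_reverse_coarseningSum, List.length_reverse, List.reverse_reverse]

theorem sum_take_mulW_antipodeW_drop_eq_counitW (w : List C) :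
    ∑ i ∈ Finset.range (w.length + 1),
      mulW (· + ·) (Finsupp.single (w.take i) 1) (antipodeW (k := k) (· + ·) 0 (w.drop i)) =
    counitW (k := k) w • Finsupp.single [] 1 := by
  have hrev : ∀ i ∈ Finset.range (w.length + 1),
      mulW (· + ·) (Finsupp.single (w.take (w.length - i)) 1)
        (antipodeW (k := k) (· + ·) 0 (w.drop (w.length - i))) =
      (mulW (· + ·) (antipodeW (· + ·) 0 (w.reverse.take i))
        (Finsupp.single (w.reverse.drop i) 1)).mapDomain List.reverse := by
    intro i _
    rw [mapDomain_reverse_mulW, mapDomain_reverse_antipodeW, Finsupp.mapDomain_single,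
      List.take_reverse, List.drop_reverse, List.reverse_reverse, List.reverse_reverse,
      mulW_comm _ add_comm]
  calc _ = ∑ i ∈ Finset.range (w.length + 1),
        mulW (· + ·) (Finsupp.single (w.take (w.length - i)) 1)
          (antipodeW (k := k) (· + ·) 0 (w.drop (w.length - i))) := by
        rw [← Finset.sum_range_reflect]
        simp only [Nat.add_sub_cancel]
    _ = (∑ i ∈ Finset.range (w.reverse.length + 1), mulW (· + ·)
          (antipodeW (· + ·) 0 (w.reverse.take i))
          (Finsupp.single (w.reverse.drop i) 1)).mapDomain List.reverse := by
        rw [Finsupp.mapDomain_finsetSum, List.length_reverse]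
        exact Finset.sum_congr rfl hrev
    _ = _ := by
      rw [sum_antipodeW_take_mulW_drop_eq_counitW, Finsupp.mapDomain_smul,
        Finsupp.mapDomain_single]
      simp [counitW]

end Antipode

end

theorem stmt12_general (k : Type*) [CommRing k] {E : Type*} [AddCommMonoid E] (m : ℕ) :
    -- coassociativity
    (∀ x : List (Fin m → E), (∀ c ∈ x, c ≠ 0) →
      ((deconc (k := k) x).sum fun p cp =>
          (deconc (k := k) p.1).sum fun q cq =>
            Finsupp.single (q.1, q.2, p.2) (cp * cq)) =
        ((deconc (k := k) x).sum fun p cp =>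
          (deconc (k := k) p.2).sum fun q cq =>
            Finsupp.single (p.1, q.1, q.2) (cp * cq))) ∧
    -- counit laws
    (∀ x : List (Fin m → E), (∀ c ∈ x, c ≠ 0) →
      ((deconc (k := k) x).sum fun p cp =>
          (cp * counitW (k := k) p.1) • Finsupp.single p.2 (1 : k)) = Finsupp.single x 1 ∧
        ((deconc (k := k) x).sum fun p cp =>
          (cp * counitW (k := k) p.2) • Finsupp.single p.1 (1 : k)) = Finsupp.single x 1) ∧
    -- Δ and ε are algebra morphisms
    (∀ x y : List (Fin m → E), (∀ c ∈ x, c ≠ 0) → (∀ c ∈ y, c ≠ 0) →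
      ((qsh (k := k) (· + ·) x y).sum fun z cz => cz • deconc (k := k) z) =
          mulPair (· + ·) (deconc (k := k) x) (deconc (k := k) y) ∧
        ((qsh (k := k) (· + ·) x y).sum fun z cz => cz * counitW (k := k) z) =
          counitW (k := k) x * counitW (k := k) y) ∧
    -- antipode identities
    (∀ x : List (Fin m → E), (∀ c ∈ x, c ≠ 0) →
      ((deconc (k := k) x).sum fun p cp =>
          cp • mulW (· + ·) (antipodeW (k := k) (· + ·) 0 p.1) (Finsupp.single p.2 (1 : k))) =
          counitW (k := k) x • Finsupp.single ([] : List (Fin m → E)) (1 : k) ∧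
        ((deconc (k := k) x).sum fun p cp =>
          cp • mulW (· + ·) (Finsupp.single p.1 (1 : k)) (antipodeW (k := k) (· + ·) 0 p.2)) =
          counitW (k := k) x • Finsupp.single ([] : List (Fin m → E)) (1 : k)) := by
  refine ⟨fun x _ => deconc_coassoc x,
    fun x _ => ⟨sum_deconc_counitW_fst x, sum_deconc_counitW_snd x⟩,
    fun x y _ _ => ⟨sum_smul_deconc_qsh _ x y, by rw [sum_mul_counitW, qsh_apply_nil]⟩,
    fun x _ => ⟨?_, ?_⟩⟩
  · rw [deconc_sum_index _ _ fun _ => by simp]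
    simpa only [one_smul] using sum_antipodeW_take_mulW_drop_eq_counitW x
  · rw [deconc_sum_index _ _ fun _ => by simp]
    simpa only [one_smul] using sum_take_mulW_antipodeW_drop_eq_counitW x

/-- for a commutative additively finite monoid `E` with
`E \ {0}` a subsemigroup, the algebra `EQSym[m]` of multi-quasisymmetric
functions with exponents in `E` (the free module on multi-compositions over
`[m]^E`, with the quasi-shuffle product) is a Hopf algebra, with coproduct the
deconcatenation `Δ`, counit `ε(M_w) = δ_{w,∅}` and antipode
`S(M_w) = (−1)^{ℓ(w)} ∑_{L ⊨ ℓ(w)} M_{L∘w^r}`:  `Δ` is coassociative with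
counit `ε`, `Δ` and `ε` are multiplicative, and `S` satisfies the antipode
identities. -/
theorem stmt12 (k : Type*) [CommRing k] {E : Type*} [AddCommMonoid E] (m : ℕ)
    (hfin : ∀ e : E, {p : E × E | p.1 + p.2 = e}.Finite)
    (hsub : ∀ a b : E, a ≠ 0 → b ≠ 0 → a + b ≠ 0) :
    -- coassociativity
    (∀ x : List (Fin m → E), (∀ c ∈ x, c ≠ 0) →
      ((deconc (k := k) x).sum fun p cp =>
          (deconc (k := k) p.1).sum fun q cq =>
            Finsupp.single (q.1, q.2, p.2) (cp * cq)) =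
        ((deconc (k := k) x).sum fun p cp =>
          (deconc (k := k) p.2).sum fun q cq =>
            Finsupp.single (p.1, q.1, q.2) (cp * cq))) ∧
    -- counit laws
    (∀ x : List (Fin m → E), (∀ c ∈ x, c ≠ 0) →
      ((deconc (k := k) x).sum fun p cp =>
          (cp * counitW (k := k) p.1) • Finsupp.single p.2 (1 : k)) = Finsupp.single x 1 ∧
        ((deconc (k := k) x).sum fun p cp =>
          (cp * counitW (k := k) p.2) • Finsupp.single p.1 (1 : k)) = Finsupp.single x 1) ∧
    -- Δ and ε are algebra morphisms
    (∀ x y : List (Fin m → E), (∀ c ∈ x, c ≠ 0) → (∀ c ∈ y, c ≠ 0) →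
      ((qsh (k := k) (· + ·) x y).sum fun z cz => cz • deconc (k := k) z) =
          mulPair (· + ·) (deconc (k := k) x) (deconc (k := k) y) ∧
        ((qsh (k := k) (· + ·) x y).sum fun z cz => cz * counitW (k := k) z) =
          counitW (k := k) x * counitW (k := k) y) ∧
    -- antipode identities
    (∀ x : List (Fin m → E), (∀ c ∈ x, c ≠ 0) →
      ((deconc (k := k) x).sum fun p cp =>
          cp • mulW (· + ·) (antipodeW (k := k) (· + ·) 0 p.1) (Finsupp.single p.2 (1 : k))) =
          counitW (k := k) x • Finsupp.single ([] : List (Fin m → E)) (1 : k) ∧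
        ((deconc (k := k) x).sum fun p cp =>
          cp • mulW (· + ·) (Finsupp.single p.1 (1 : k)) (antipodeW (k := k) (· + ·) 0 p.2)) =
          counitW (k := k) x • Finsupp.single ([] : List (Fin m → E)) (1 : k)) :=
  stmt12_general k m
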